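/- arXiv:2603.19554 — 2 statements merged into one kernel-verified Lean document; each statement's English description precedes it below -/
import Mathlib

section
/- Let θ₀ = (1+√5)/2 be the golden ratio, and let β be a Perron number of degree d over ℚ that is neither a Pisot number nor a Salem number (so that M(β) > β). Then for every integer n ≥ 1 such that β^n is a Parry number, one has n ≤ d·log(θ₀)/(log(M(β)) − log(β)). In particular, if d·log(θ₀)/(log(M(β)) − log(β)) < 1, then β itself is not a Parry number. -/
/-- The β-transformation `x ↦ βx - ⌊βx⌋`. -/
noncomputable def betaT (β : ℝ) (x : ℝ) : ℝ := β * x - ⌊β * x⌋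

/-- `β` is a Parry number: `β > 1` and the forward orbit of `1` under the
β-transformation is finite. -/
def IsParry (β : ℝ) : Prop :=
  1 < β ∧ Set.Finite {x : ℝ | ∃ n : ℕ, 1 ≤ n ∧ (betaT β)^[n] 1 = x}

/-- `β` is a simple Parry number: Parry, and the orbit of `1` hits `0`. -/
def IsSimpleParry (β : ℝ) : Prop :=
  IsParry β ∧ ∃ n : ℕ, 1 ≤ n ∧ (betaT β)^[n] 1 = 0

/-- `β` is a Perron number: a real algebraic integer `β > 1` all of whose Galois
conjugates other than `β` itself have complex absolute value `< β`. -/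
def IsPerron (β : ℝ) : Prop :=
  1 < β ∧ IsIntegral ℤ β ∧
    ∀ z : ℂ, Polynomial.aeval z (minpoly ℚ β) = 0 → z ≠ (β : ℂ) → ‖z‖ < β

/-- `β` is a Pisot number. -/
def IsPisot (β : ℝ) : Prop :=
  1 < β ∧ IsIntegral ℤ β ∧
    ∀ z : ℂ, Polynomial.aeval z (minpoly ℚ β) = 0 → z ≠ (β : ℂ) → ‖z‖ < 1

/-- `β` is a Salem number. -/
def IsSalem (β : ℝ) : Prop :=
  1 < β ∧ IsIntegral ℤ β ∧
    (∀ z : ℂ, Polynomial.aeval z (minpoly ℚ β) = 0 → z ≠ (β : ℂ) → ‖z‖ ≤ 1) ∧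
    (∃ z : ℂ, Polynomial.aeval z (minpoly ℚ β) = 0 ∧ ‖z‖ = 1)

/-- `β` has Parry order exactly `n`: if `n ≥ 1` then `β ^ n` is Parry, and no higher
power of `β` is Parry. -/
def HasParryOrder (β : ℝ) (n : ℕ) : Prop :=
  (1 ≤ n → IsParry (β ^ n)) ∧ ∀ k : ℕ, n < k → ¬ IsParry (β ^ k)

/-- Mahler measure of an algebraic number `β`: product of `max 1 |α|` over the complex
roots `α` of the minimal polynomial of `β` over `ℚ`. -/
noncomputable def mahlerMeasureOf (β : ℝ) : ℝ :=
  (((minpoly ℚ β).map (algebraMap ℚ ℂ)).roots.map (fun z => max 1 (‖z‖))).prod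

/-!
If `γ` is a Parry number, the orbit `r k = T_γ^k 1` is eventually periodic and satisfies
`r (k + 1) = γ r k - d k` with integer digits `d k`, so `r k = P_k(γ)` for polynomials
`P_k ∈ ℚ[X]` built from the digits. For a conjugate `z ≠ γ` the values `P_k(z)` obey the same
recurrence with `z` in place of `γ` and are again eventually periodic, hence bounded; for
`|z| > 1` telescoping then gives `∑ r k z⁻ᵏ = 0`. Taking real parts, a power series with
coefficients in `[0, 1]` and constant term `1` has no zero in `|y| < 1/φ`, so every conjugate of
a Parry number lies in `|z| ≤ φ`.

Applied to `γ = β ^ n`, every conjugate `z ≠ β` of the Perron number `β` satisfies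
`max 1 |z| ^ n ≤ φ`, whence `(M(β) / β) ^ n ≤ φ ^ d`; since `β` is neither Pisot nor Salem,
some conjugate lies outside the unit circle and `M(β) > β`.
-/

open Polynomial Filter
open scoped goldenRatio

theorem Complex.one_div_one_add_norm_le_re_inv_one_sub {y : ℂ} (hy : ‖y‖ < 1) :
    1 / (1 + ‖y‖) ≤ ((1 - y)⁻¹).re := by
  have hnormSq : Complex.normSq (1 - y) = 1 - 2 * y.re + ‖y‖ ^ 2 := by
    rw [Complex.sq_norm, Complex.normSq_apply, Complex.normSq_apply]
    simp only [Complex.sub_re, Complex.one_re, Complex.sub_im, Complex.one_im]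
    ring
  have hre : |y.re| ≤ ‖y‖ := Complex.abs_re_le_norm y
  rw [Complex.inv_re, hnormSq, Complex.sub_re, Complex.one_re,
    div_le_div_iff₀ (by positivity) (by nlinarith [abs_le.mp hre])]
  -- the difference of the two sides is `(‖y‖ + y.re) * (1 - ‖y‖)`
  nlinarith [abs_le.mp hre, norm_nonneg y]

theorem re_pos_of_hasSum_of_mem_Icc {r : ℕ → ℝ} (hr0 : r 0 = 1) (hr : ∀ k, r k ∈ Set.Icc 0 1)
    {y : ℂ} (hy : ‖y‖ ^ 2 + ‖y‖ < 1) {S : ℂ} (hS : HasSum (fun k => (r k : ℂ) * y ^ k) S) :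
    0 < S.re := by
  set ρ := ‖y‖
  have hρ : ρ < 1 := by nlinarith [norm_nonneg y]
  -- `r k * a ≥ min 0 a ≥ (a - ρ ^ k) / 2` for `a = (y ^ k).re`, with the exact value at `k = 0`
  have hlower : ∀ k, (((y ^ k).re - ρ ^ k) / 2 + if k = 0 then 1 else 0) ≤ r k * (y ^ k).re := by
    intro k
    rcases eq_or_ne k 0 with rfl | hk
    · simp [hr0]
    · have habs : |(y ^ k).re| ≤ ρ ^ k := (Complex.abs_re_le_norm _).trans (norm_pow y k).le
      rw [if_neg hk, add_zero]
      rcases le_or_gt 0 (y ^ k).re with h | h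
      · nlinarith [(hr k).1, (abs_le.mp habs).2]
      · nlinarith [(hr k).2, (abs_le.mp habs).1]
  have hgeom : HasSum (fun k => (y ^ k).re) ((1 - y)⁻¹).re :=
    Complex.hasSum_re (hasSum_geometric_of_norm_lt_one (by simpa using hρ))
  have hsum_lower := ((hgeom.sub (hasSum_geometric_of_lt_one (norm_nonneg y) hρ)).div_const 2).add
    (hasSum_ite_eq 0 (1 : ℝ))
  have hS_re : HasSum (fun k => r k * (y ^ k).re) S.re := by
    simpa [Complex.re_ofReal_mul] using Complex.hasSum_re hS
  have hle := hasSum_le hlower hsum_lower hS_re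
  have hre := Complex.one_div_one_add_norm_le_re_inv_one_sub (y := y) (by simpa using hρ)
  have hρ0 : 0 ≤ ρ := norm_nonneg y
  have hgap : 2 + 1 / (1 + ρ) - (1 - ρ)⁻¹ = 2 * (1 - ρ - ρ ^ 2) / ((1 - ρ) * (1 + ρ)) := by
    field_simp [(by linarith : 1 - ρ ≠ 0)]
    ring
  have hpos : 0 < 2 * (1 - ρ - ρ ^ 2) / ((1 - ρ) * (1 + ρ)) :=
    div_pos (by linarith) (mul_pos (by linarith) (by linarith))
  linarith

theorem Function.Periodic.finite_range_nat {α : Type*} {f : ℕ → α} {p : ℕ}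
    (hf : Function.Periodic f p) (hp : 0 < p) : (Set.range f).Finite :=
  ((Set.finite_lt_nat p).image f).subset <| by
    rintro _ ⟨n, rfl⟩
    exact ⟨n % p, Nat.mod_lt n hp, hf.map_mod_nat n⟩

theorem Filter.isBoundedUnder_norm_of_periodic_tail {E : Type*} [Norm E] {s : ℕ → E} {m p : ℕ}
    (hp : 0 < p) (h : Function.Periodic (fun j => s (m + j)) p) :
    IsBoundedUnder (· ≤ ·) atTop (norm ∘ s) := by
  obtain ⟨C, hC⟩ := ((h.finite_range_nat hp).image norm).bddAbove
  refine isBoundedUnder_of_eventually_le (a := C) (eventually_atTop.2 ⟨m, fun N hN => hC ?_⟩)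
  exact ⟨_, ⟨N - m, rfl⟩, by simp [Nat.add_sub_cancel' hN]⟩

theorem tendsto_sum_of_recurrence {𝕜 : Type*} [NormedField 𝕜] {s c : ℕ → 𝕜} {z : 𝕜}
    (hs : ∀ k, s (k + 1) = z * s k - c k) (hbdd : IsBoundedUnder (· ≤ ·) atTop (norm ∘ s))
    (hz : 1 < ‖z‖) :
    Tendsto (fun N => ∑ i ∈ Finset.range N, c i * z⁻¹ ^ (i + 1)) atTop (nhds (s 0)) := by
  have hzy : z * z⁻¹ = 1 := mul_inv_cancel₀ (norm_pos_iff.1 (one_pos.trans hz))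
  have htelescope : ∀ N, ∑ i ∈ Finset.range N, c i * z⁻¹ ^ (i + 1) = s 0 - s N * z⁻¹ ^ N := by
    intro N
    induction N with
    | zero => simp
    | succ N ih =>
      rw [Finset.sum_range_succ, ih, hs]
      linear_combination (s N * z⁻¹ ^ N) * hzy
  have hy : ‖z⁻¹‖ < 1 := by rwa [norm_inv, inv_lt_one₀ (one_pos.trans hz)]
  have hlim : Tendsto (fun N => s N * z⁻¹ ^ N) atTop (nhds 0) :=
    isBoundedUnder_le_mul_tendsto_zero hbdd (tendsto_pow_atTop_nhds_zero_of_norm_lt_one hy)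
  simp_rw [htelescope]
  simpa using (tendsto_const_nhds (x := s 0)).sub hlim

theorem minpoly.aeval_eq_of_aeval_eq {K A B : Type*} [Field K] [Ring A] [Algebra K A]
    [CommRing B] [Algebra K B] {x : A} {z : B} (hz : Polynomial.aeval z (minpoly K x) = 0)
    {p q : K[X]} (h : Polynomial.aeval x p = Polynomial.aeval x q) :
    Polynomial.aeval z p = Polynomial.aeval z q := by
  obtain ⟨c, hc⟩ := minpoly.dvd K x (p := p - q) (by rw [map_sub, h, sub_self])
  rw [← sub_eq_zero, ← map_sub, hc, map_mul, hz, zero_mul]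

theorem minpoly.aeval_pow_minpoly_pow {K A B : Type*} [Field K] [CommRing A] [Algebra K A]
    [CommRing B] [Algebra K B] {x : A} {z : B} (hz : Polynomial.aeval z (minpoly K x) = 0)
    (n : ℕ) : Polynomial.aeval (z ^ n) (minpoly K (x ^ n)) = 0 := by
  have h := minpoly.aeval_eq_of_aeval_eq hz (p := (minpoly K (x ^ n)).comp (X ^ n)) (q := 0)
    (by simp [aeval_comp])
  simpa [aeval_comp] using h

section BetaExpansion

variable (γ : ℝ)

noncomputable def betaOrbit (k : ℕ) : ℝ := (betaT γ)^[k] 1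

noncomputable def betaDigit (k : ℕ) : ℤ := ⌊γ * betaOrbit γ k⌋

theorem betaOrbit_zero : betaOrbit γ 0 = 1 := rfl

theorem betaOrbit_succ (k : ℕ) : betaOrbit γ (k + 1) = γ * betaOrbit γ k - betaDigit γ k :=
  Function.iterate_succ_apply' _ _ _

theorem betaOrbit_mem_Icc (k : ℕ) : betaOrbit γ k ∈ Set.Icc 0 1 := by
  cases k with
  | zero => simp [betaOrbit_zero]
  | succ k =>
    rw [betaOrbit_succ, betaDigit]
    exact ⟨Int.fract_nonneg _, (Int.fract_lt_one _).le⟩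

noncomputable def digitPoly : ℕ → ℚ[X]
  | 0 => 1
  | k + 1 => X * digitPoly k - C (betaDigit γ k : ℚ)

theorem aeval_digitPoly_self (k : ℕ) : aeval γ (digitPoly γ k) = betaOrbit γ k := by
  induction k with
  | zero => simp [digitPoly, betaOrbit_zero]
  | succ k ih => simp [digitPoly, ih, betaOrbit_succ]

theorem aeval_digitPoly_succ {A : Type*} [CommRing A] [Algebra ℚ A] (z : A) (k : ℕ) :
    aeval z (digitPoly γ (k + 1)) = z * aeval z (digitPoly γ k) - betaDigit γ k := by
  simp [digitPoly]

variable {γ}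

theorem IsParry.exists_periodic_betaOrbit (h : IsParry γ) :
    ∃ m p : ℕ, 0 < p ∧ Function.Periodic (fun j => betaOrbit γ (m + j)) p := by
  have : Finite {x : ℝ | ∃ n : ℕ, 1 ≤ n ∧ (betaT γ)^[n] 1 = x} := h.2.to_subtype
  obtain ⟨a, b, hab, heq⟩ := Finite.exists_ne_map_eq_of_infinite
    fun k : ℕ => (⟨betaOrbit γ (k + 1), k + 1, k.succ_pos, rfl⟩ :
      {x : ℝ | ∃ n : ℕ, 1 ≤ n ∧ (betaT γ)^[n] 1 = x})
  replace heq : betaOrbit γ (a + 1) = betaOrbit γ (b + 1) := congrArg Subtype.val heq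
  wlog hlt : a < b generalizing a b
  · exact this b a hab.symm heq.symm (by omega)
  refine ⟨a + 1, b - a, by omega, fun j => ?_⟩
  simp only [betaOrbit]
  rw [show a + 1 + (j + (b - a)) = j + (b + 1) by omega, add_comm (a + 1) j,
    Function.iterate_add_apply _ j (b + 1), Function.iterate_add_apply _ j (a + 1)]
  exact congrArg (betaT γ)^[j] heq.symm

theorem IsParry.hasSum_betaOrbit_conj_eq_zero (h : IsParry γ) {z : ℂ}
    (hz : aeval z (minpoly ℚ γ) = 0) (hne : z ≠ γ) (hz1 : 1 < ‖z‖) :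
    HasSum (fun k => (betaOrbit γ k : ℂ) * z⁻¹ ^ k) 0 := by
  set y := z⁻¹
  have hy : ‖y‖ < 1 := by rwa [norm_inv, inv_lt_one₀ (one_pos.trans hz1)]
  obtain ⟨m, p, hp, hper⟩ := h.exists_periodic_betaOrbit
  have hbdd : IsBoundedUnder (· ≤ ·) atTop (norm ∘ fun k => aeval z (digitPoly γ k)) :=
    isBoundedUnder_norm_of_periodic_tail hp fun j =>
      minpoly.aeval_eq_of_aeval_eq hz (by simpa only [aeval_digitPoly_self] using hper j)
  have hdigits := tendsto_sum_of_recurrence (aeval_digitPoly_succ γ z) hbdd hz1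
  obtain ⟨T, hT⟩ : Summable fun k => (betaOrbit γ k : ℂ) * y ^ k :=
    .of_norm_bounded (summable_geometric_of_lt_one (norm_nonneg y) hy) fun k => by
      rw [norm_mul, norm_pow, Complex.norm_real, Real.norm_of_nonneg (betaOrbit_mem_Icc γ k).1]
      exact mul_le_of_le_one_left (by positivity) (betaOrbit_mem_Icc γ k).2
  have htail : HasSum (fun k => (betaOrbit γ (k + 1) : ℂ) * y ^ (k + 1)) (T - 1) := by
    simpa [betaOrbit_zero] using (hasSum_nat_add_iff' 1).2 hT
  have hdigit : ∀ k, (betaDigit γ k : ℂ) * y ^ (k + 1) =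
      γ * y * ((betaOrbit γ k : ℂ) * y ^ k) - (betaOrbit γ (k + 1) : ℂ) * y ^ (k + 1) := by
    intro k
    rw [betaOrbit_succ]
    push_cast
    ring
  -- both sides are the sum of the digit series `∑ d k * y ^ (k + 1)`
  have hsum : γ * y * T - (T - 1) = 1 := by
    refine tendsto_nhds_unique ?_ (by simpa only [digitPoly, map_one] using hdigits)
    simpa only [← hdigit] using ((hT.mul_left (γ * y)).sub htail).tendsto_sum_nat
  have hγy : (γ : ℂ) * y - 1 ≠ 0 := by
    rw [sub_ne_zero]
    exact fun h => hne ((mul_inv_eq_one₀ (norm_pos_iff.1 (one_pos.trans hz1))).1 h).symm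
  have hT0 : T = 0 := by simpa [hγy] using (show T * (γ * y - 1) = 0 by linear_combination hsum)
  exact hT0 ▸ hT

theorem IsParry.norm_le_goldenRatio (h : IsParry γ) {z : ℂ} (hz : aeval z (minpoly ℚ γ) = 0)
    (hne : z ≠ γ) : ‖z‖ ≤ φ := by
  by_contra! hlt
  have hy : ‖z⁻¹‖ < φ - 1 := by
    have hinv : φ⁻¹ = φ - 1 := by
      rw [Real.inv_goldenRatio]
      linarith [Real.goldenRatio_add_goldenConj]
    rw [norm_inv, ← hinv]
    exact inv_strictAnti₀ Real.goldenRatio_pos hlt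
  have hy2 : ‖z⁻¹‖ ^ 2 + ‖z⁻¹‖ < 1 := by
    nlinarith [Real.goldenRatio_sq, norm_nonneg z⁻¹, Real.one_lt_goldenRatio]
  simpa using re_pos_of_hasSum_of_mem_Icc (betaOrbit_zero γ) (betaOrbit_mem_Icc γ) hy2
    (h.hasSum_betaOrbit_conj_eq_zero hz hne (Real.one_lt_goldenRatio.trans hlt))

end BetaExpansion

noncomputable def otherConjugates (β : ℝ) : Multiset ℂ :=
  ((minpoly ℚ β).map (algebraMap ℚ ℂ)).roots.erase (β : ℂ)

section Conjugates

variable {β : ℝ}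

theorem mem_roots_map_minpoly_iff (hβ : IsIntegral ℚ β) {z : ℂ} :
    z ∈ ((minpoly ℚ β).map (algebraMap ℚ ℂ)).roots ↔ aeval z (minpoly ℚ β) = 0 := by
  rw [mem_roots (map_ne_zero (minpoly.ne_zero hβ)), IsRoot, eval_map, ← aeval_def]

theorem mem_otherConjugates (hβ : IsIntegral ℚ β) {z : ℂ} :
    z ∈ otherConjugates β ↔ aeval z (minpoly ℚ β) = 0 ∧ z ≠ β := by
  rw [otherConjugates, (nodup_roots (minpoly.irreducible hβ).separable.map).mem_erase_iff,
    mem_roots_map_minpoly_iff hβ, and_comm]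

theorem card_otherConjugates_le : Multiset.card (otherConjugates β) ≤ (minpoly ℚ β).natDegree :=
  (Multiset.card_erase_le).trans ((card_roots' _).trans (natDegree_map _).le)

theorem roots_map_minpoly_eq_cons (hβ : IsIntegral ℚ β) :
    ((minpoly ℚ β).map (algebraMap ℚ ℂ)).roots = (β : ℂ) ::ₘ otherConjugates β := by
  refine (Multiset.cons_erase ?_).symm
  rw [mem_roots_map_minpoly_iff hβ, ← Complex.coe_algebraMap, aeval_algebraMap_apply,
    minpoly.aeval, map_zero]

theorem log_mahlerMeasureOf_sub_log (hβ : IsIntegral ℚ β) (h1 : 1 ≤ β) :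
    Real.log (mahlerMeasureOf β) - Real.log β =
      ((otherConjugates β).map fun z => Real.log (max 1 ‖z‖)).sum := by
  have hone_le : ∀ x ∈ (otherConjugates β).map fun z => max 1 ‖z‖, 1 ≤ x := by
    intro x hx
    obtain ⟨z, -, rfl⟩ := Multiset.mem_map.1 hx
    exact le_max_left 1 ‖z‖
  have hprod_ne : ((otherConjugates β).map fun z => max 1 ‖z‖).prod ≠ 0 :=
    Multiset.prod_ne_zero fun h0 => by linarith [hone_le 0 h0]
  rw [mahlerMeasureOf, roots_map_minpoly_eq_cons hβ, Multiset.map_cons, Multiset.prod_cons,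
    Complex.norm_real, Real.norm_of_nonneg (by linarith), max_eq_right h1,
    Real.log_mul (by linarith) hprod_ne, add_sub_cancel_left,
    Real.log_multiset_prod fun x hx => by linarith [hone_le x hx], Multiset.map_map]
  rfl

theorem exists_mem_otherConjugates_one_lt_norm (h1 : 1 < β) (hint : IsIntegral ℤ β)
    (hp : ¬ IsPisot β) (hs : ¬ IsSalem β) : ∃ z ∈ otherConjugates β, 1 < ‖z‖ := by
  simp only [mem_otherConjugates hint.tower_top, and_assoc]
  by_contra! hle
  obtain ⟨z, hz, hne, hz1⟩ : ∃ z : ℂ, aeval z (minpoly ℚ β) = 0 ∧ z ≠ β ∧ 1 ≤ ‖z‖ := by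
    simpa [IsPisot, h1, hint] using hp
  exact hs ⟨h1, hint, hle, z, hz, (hle z hz hne).antisymm hz1⟩

theorem sum_log_otherConjugates_pos (h1 : 1 < β) (hint : IsIntegral ℤ β)
    (hp : ¬ IsPisot β) (hs : ¬ IsSalem β) :
    0 < ((otherConjugates β).map fun z => Real.log (max 1 ‖z‖)).sum := by
  obtain ⟨z, hz, hz1⟩ := exists_mem_otherConjugates_one_lt_norm h1 hint hp hs
  refine (Real.log_pos (lt_max_of_lt_right hz1)).trans_le (Multiset.single_le_sum ?_ _
    (Multiset.mem_map_of_mem _ hz))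
  intro x hx
  obtain ⟨w, -, rfl⟩ := Multiset.mem_map.1 hx
  exact Real.log_nonneg (le_max_left 1 ‖w‖)

theorem IsPerron.max_one_norm_pow_le_goldenRatio (hβ : IsPerron β) {n : ℕ} (hn : 1 ≤ n)
    (hP : IsParry (β ^ n)) {z : ℂ} (hz : z ∈ otherConjugates β) : max 1 ‖z‖ ^ n ≤ φ := by
  obtain ⟨hroot, hne⟩ := (mem_otherConjugates hβ.2.1.tower_top).1 hz
  rcases le_total ‖z‖ 1 with hz1 | hz1
  · rw [max_eq_left hz1, one_pow]
    exact Real.one_lt_goldenRatio.le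
  · have hlt : ‖z ^ n‖ < ‖((β ^ n : ℝ) : ℂ)‖ := by
      rw [norm_pow, Complex.norm_real, Real.norm_of_nonneg (pow_pos (one_pos.trans hβ.1) n).le]
      exact pow_lt_pow_left₀ (hβ.2.2 z hroot hne) (norm_nonneg z) (by omega)
    rw [max_eq_right hz1, ← norm_pow]
    exact hP.norm_le_goldenRatio (by simpa using minpoly.aeval_pow_minpoly_pow hroot n)
      (fun h => hlt.ne (by rw [h]))

theorem IsPerron.mul_sum_log_otherConjugates_le (hβ : IsPerron β) {n : ℕ} (hn : 1 ≤ n)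
    (hP : IsParry (β ^ n)) :
    n * ((otherConjugates β).map fun z => Real.log (max 1 ‖z‖)).sum ≤
      (minpoly ℚ β).natDegree * Real.log φ := by
  rw [← Multiset.sum_map_mul_left]
  calc _ ≤ Multiset.card (otherConjugates β) • Real.log φ := by
        rw [← Multiset.card_map (fun z => n * Real.log (max 1 ‖z‖))]
        refine Multiset.sum_le_card_nsmul _ _ fun x hx => ?_
        obtain ⟨z, hz, rfl⟩ := Multiset.mem_map.1 hx
        rw [← Real.log_pow]
        exact Real.log_le_log (by positivity) (hβ.max_one_norm_pow_le_goldenRatio hn hP hz)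
    _ ≤ (minpoly ℚ β).natDegree * Real.log φ := by
        rw [nsmul_eq_mul]
        gcongr
        · exact Real.log_nonneg Real.one_lt_goldenRatio.le
        · exact_mod_cast card_otherConjugates_le

end Conjugates

/-- Bound on the Parry order of a Perron number which is neither Pisot nor Salem,
in terms of its degree and Mahler measure. -/
theorem parry_order_bound (β : ℝ) (hβ : IsPerron β)
    (hp : ¬ IsPisot β) (hs : ¬ IsSalem β) :
    (∀ n : ℕ, 1 ≤ n → IsParry (β ^ n) →
      (n : ℝ) ≤ (minpoly ℚ β).natDegree * Real.log ((1 + Real.sqrt 5) / 2) /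
        (Real.log (mahlerMeasureOf β) - Real.log β)) ∧
    ((minpoly ℚ β).natDegree * Real.log ((1 + Real.sqrt 5) / 2) /
        (Real.log (mahlerMeasureOf β) - Real.log β) < 1 → ¬ IsParry β) := by
  have hbound : ∀ n : ℕ, 1 ≤ n → IsParry (β ^ n) →
      (n : ℝ) ≤ (minpoly ℚ β).natDegree * Real.log φ /
        (Real.log (mahlerMeasureOf β) - Real.log β) := by
    intro n hn hP
    rw [log_mahlerMeasureOf_sub_log hβ.2.1.tower_top hβ.1.le,
      le_div_iff₀ (sum_log_otherConjugates_pos hβ.1 hβ.2.1 hp hs)]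
    exact hβ.mul_sum_log_otherConjugates_le hn hP
  refine ⟨hbound, fun hlt hP => ?_⟩
  have h := hbound 1 le_rfl (by rwa [pow_one])
  rw [Nat.cast_one] at h
  exact (h.trans_lt hlt).false
end

section
/- The set H₀ of Perron numbers β such that β^n is not a Parry number for every integer n ≥ 1 is dense in (1, ∞): for all real numbers u, v with 1 < u < v, there exists a Perron number β with u < β < v such that no positive power of β is a Parry number. -/
open Polynomial Set Filter

/-!
Fix `k` large and a prime `q`, an integer `p` with `p < q` and `4q < p²`, so that
`Y² - pY + q = (Y - γ)(Y - δ)` with real `γ ≥ δ > 1`; choose them (Bertrand) with `u^k < γ` and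
`p + 1 ≤ v^k`. Then `g = X^{2k} - pX^k - X + q = (X^k - γ)(X^k - δ) - X` has a largest real root
`β ∈ (u, v)` and another real root `α ∈ (1, β)`. From `|z^k - γ| |z^k - δ| = |z|` and
`|z^k - γ| ≥ | |z|^k - γ |` every complex root `z` satisfies `1 < |z|`, and `|z| ≤ β` with equality
only at `z = β`. The prime constant term then forces `g` to be irreducible, so `β` is a Perron
number and `α` is a conjugate of `β`; hence `αⁿ` is a real conjugate of `βⁿ` in `(1, βⁿ)`.

A Parry number `B` has no such conjugate `A`: the integer polynomials `Pₙ` with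
`Pₙ(B) = T_Bⁿ(1)` take finitely many values at `A` (as `T_Bⁿ(1)` does at `B`), whereas
`T_Bⁿ⁺¹(1) - Pₙ₊₁(A) ≥ Aⁿ (B - A)` is unbounded.
-/

section BetaExpansion

variable (B : ℝ)

noncomputable def betaOrbitPoly : ℕ → ℤ[X]
  | 0 => 1
  | k + 1 => X * betaOrbitPoly k - C ⌊B * (betaT B)^[k] 1⌋

lemma aeval_betaOrbitPoly_succ (A : ℝ) (k : ℕ) :
    aeval A (betaOrbitPoly B (k + 1)) =
      A * aeval A (betaOrbitPoly B k) - ⌊B * (betaT B)^[k] 1⌋ := by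
  simp [betaOrbitPoly]

lemma aeval_betaOrbitPoly (k : ℕ) : aeval B (betaOrbitPoly B k) = (betaT B)^[k] 1 := by
  induction k with
  | zero => simp [betaOrbitPoly]
  | succ k ih => rw [aeval_betaOrbitPoly_succ, ih, Function.iterate_succ_apply']; rfl

lemma betaT_iterate_one_mem_Icc (k : ℕ) : (betaT B)^[k] 1 ∈ Icc (0 : ℝ) 1 := by
  cases k with
  | zero => simp
  | succ k =>
    rw [Function.iterate_succ_apply']
    exact ⟨Int.fract_nonneg _, (Int.fract_lt_one _).le⟩

variable {B}

lemma pow_mul_sub_le_betaT_iterate_sub_aeval {A : ℝ} (hA : 0 ≤ A) (hAB : A ≤ B) (m : ℕ) :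
    A ^ m * (B - A) ≤ (betaT B)^[m + 1] 1 - aeval A (betaOrbitPoly B (m + 1)) := by
  have hstep : ∀ k, (betaT B)^[k + 1] 1 - aeval A (betaOrbitPoly B (k + 1)) =
      A * ((betaT B)^[k] 1 - aeval A (betaOrbitPoly B k)) + (B - A) * (betaT B)^[k] 1 := by
    intro k
    rw [aeval_betaOrbitPoly_succ, ← aeval_betaOrbitPoly B (k + 1), aeval_betaOrbitPoly_succ,
      aeval_betaOrbitPoly]
    ring
  induction m with
  | zero => rw [hstep]; simp [betaOrbitPoly]
  | succ m ih =>
    rw [hstep, pow_succ]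
    have hx0 := (betaT_iterate_one_mem_Icc B (m + 1)).1
    nlinarith [mul_le_mul_of_nonneg_left ih hA, mul_nonneg (sub_nonneg.2 hAB) hx0]

theorem not_isParry_of_conj {A : ℝ} (hA : 1 < A) (hAB : A < B)
    (hconj : ∀ F : ℤ[X], aeval B F = 0 → aeval A F = 0) : ¬ IsParry B := by
  rintro ⟨-, hfin⟩
  set x : ℕ → ℝ := fun k => (betaT B)^[k] 1
  set y : ℕ → ℝ := fun k => aeval A (betaOrbitPoly B k)
  have hxy : y.FactorsThrough x := fun j k hjk => by
    simpa [y, sub_eq_zero] using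
      hconj (betaOrbitPoly B j - betaOrbitPoly B k) (by simpa [sub_eq_zero, aeval_betaOrbitPoly])
  have hsub : {t | ∃ n, 1 ≤ n ∧ y n = t} ⊆ Function.extend x y 0 '' {t | ∃ n, 1 ≤ n ∧ x n = t} := by
    rintro _ ⟨n, hn, rfl⟩
    exact ⟨x n, ⟨n, hn, rfl⟩, hxy.extend_apply 0 n⟩
  obtain ⟨b, hb⟩ := ((hfin.image _).subset hsub).bddBelow
  obtain ⟨m, hm⟩ := pow_unbounded_of_one_lt ((1 - b) / (B - A)) hA
  rw [div_lt_iff₀ (sub_pos.2 hAB)] at hm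
  have hy : b ≤ y (m + 1) := hb ⟨m + 1, by omega, rfl⟩
  linarith [pow_mul_sub_le_betaT_iterate_sub_aeval (by linarith) hAB.le m,
    (betaT_iterate_one_mem_Icc B (m + 1)).2]

end BetaExpansion

lemma Multiset.one_lt_prod_of_one_lt {R : Type*} [CommSemiring R] [PartialOrder R]
    [IsStrictOrderedRing R] {s : Multiset R} (hs : s ≠ 0) (h : ∀ x ∈ s, 1 < x) :
    1 < s.prod := by
  obtain ⟨a, ha⟩ := Multiset.exists_mem_of_ne_zero hs
  obtain ⟨t, rfl⟩ := Multiset.exists_cons_of_mem ha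
  rw [Multiset.prod_cons]
  exact one_lt_mul_of_lt_of_le (h a (Multiset.mem_cons_self _ _))
    (Multiset.one_le_prod fun x hx => (h x (Multiset.mem_cons_of_mem hx)).le)

lemma one_lt_norm_coeff_zero {f : ℂ[X]} (hf : f.Monic) (hdeg : f.natDegree ≠ 0)
    (hroots : ∀ z ∈ f.roots, 1 < ‖z‖) : 1 < ‖f.coeff 0‖ := by
  have hsplit := IsAlgClosed.splits f
  rw [hsplit.coeff_zero_eq_prod_roots_of_monic hf, norm_mul, norm_pow, norm_neg, norm_one,
    one_pow, one_mul]
  have hprod : ‖f.roots.prod‖ = (f.roots.map (‖·‖)).prod := map_multiset_prod normHom f.roots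
  rw [hprod]
  refine Multiset.one_lt_prod_of_one_lt ?_ (Multiset.forall_mem_map_iff.2 hroots)
  rw [Ne, Multiset.map_eq_zero, ← Multiset.card_eq_zero, ← hsplit.natDegree_eq_card_roots]
  exact hdeg

lemma not_isUnit_coeff_zero_of_one_lt_norm_roots {f : ℤ[X]} (hf : f.Monic) (hdeg : f.natDegree ≠ 0)
    (hroots : ∀ z : ℂ, aeval z f = 0 → 1 < ‖z‖) : ¬ IsUnit (f.coeff 0) := by
  have h := one_lt_norm_coeff_zero (hf.map (algebraMap ℤ ℂ)) (by rwa [hf.natDegree_map])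
    fun z hz => hroots z (by simpa [aeval_def, eval_map] using (mem_roots (hf.map _).ne_zero).1 hz)
  rw [coeff_map, eq_intCast, Complex.norm_intCast] at h
  rw [Int.isUnit_iff_abs_eq]
  exact_mod_cast h.ne'

theorem irreducible_of_prime_coeff_zero {g : ℤ[X]} (hg : g.Monic) (hprime : Prime (g.coeff 0))
    (hroots : ∀ z : ℂ, aeval z g = 0 → 1 < ‖z‖) : Irreducible g := by
  refine hg.irreducible_iff_natDegree.2 ⟨fun h => hprime.not_isUnit (by simp [h]), ?_⟩
  rintro f h hf hh rfl
  have hroots_of_dvd {f' : ℤ[X]} (hdvd : f' ∣ f * h) (z : ℂ) (hz : aeval z f' = 0) : 1 < ‖z‖ := by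
    obtain ⟨e, he⟩ := hdvd
    exact hroots z (by rw [he, map_mul, hz, zero_mul])
  rw [mul_coeff_zero] at hprime
  by_contra! hdeg
  rcases hprime.irreducible.isUnit_or_isUnit rfl with hu | hu
  · exact not_isUnit_coeff_zero_of_one_lt_norm_roots hf hdeg.1
      (hroots_of_dvd (dvd_mul_right f h)) hu
  · exact not_isUnit_coeff_zero_of_one_lt_norm_roots hh hdeg.2
      (hroots_of_dvd (dvd_mul_left h f)) hu

lemma minpoly_eq_of_irreducible {R S : Type*} [CommRing R] [IsDomain R] [IsIntegrallyClosed R]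
    [CommRing S] [IsDomain S] [Algebra R S] [Module.IsTorsionFree R S] {s : S} {g : R[X]}
    (hg : g.Monic) (hirr : Irreducible g) (hs : aeval s g = 0) : minpoly R s = g := by
  have hint : IsIntegral R s := ⟨g, hg, hs⟩
  have hdvd := minpoly.isIntegrallyClosed_dvd hint hs
  exact eq_of_monic_of_associated (minpoly.monic hint) hg
    (associated_of_dvd_dvd hdvd ((minpoly.irreducible hint).dvd_symm hirr hdvd))

noncomputable def quadPowPoly (k p q : ℕ) : ℤ[X] := X ^ (2 * k) - C (p : ℤ) * X ^ k - X + C (q : ℤ)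

section quadPowPoly

variable {k p q : ℕ}

lemma aeval_quadPowPoly {A : Type*} [CommRing A] {γ δ : A} (hsum : γ + δ = p) (hprod : γ * δ = q)
    (z : A) : aeval z (quadPowPoly k p q) = (z ^ k - γ) * (z ^ k - δ) - z := by
  simp only [quadPowPoly, map_add, map_sub, map_mul, map_pow, aeval_X, map_natCast]
  linear_combination z ^ k * hsum - hprod

lemma quadPowPoly_monic (hk : k ≠ 0) : (quadPowPoly k p q).Monic := by
  have hdeg : (C (p : ℤ) * X ^ k + X - C (q : ℤ)).degree < ↑(2 * k) := by
    compute_degree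
    rw [Nat.cast_withBot]
    exact max_lt (WithBot.coe_lt_coe.2 (by omega)) (WithBot.coe_lt_coe.2 (by omega))
  rw [quadPowPoly, show ∀ a b c d : ℤ[X], a - b - c + d = a - (b + c - d) by intros; ring]
  exact monic_X_pow_sub hdeg

lemma coeff_zero_quadPowPoly (hk : k ≠ 0) : (quadPowPoly k p q).coeff 0 = q := by
  simp [quadPowPoly, coeff_X, hk, Ne.symm hk]

end quadPowPoly

lemma Complex.eq_norm_of_norm_sub_ofReal {w : ℂ} {r : ℝ} (hr : 0 < r) (h : ‖w - r‖ = ‖w‖ - r) :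
    w = ‖w‖ := by
  have hsq : ‖w - r‖ ^ 2 = (‖w‖ - r) ^ 2 := by rw [h]
  have hre : w.re = ‖w‖ := by
    rw [sub_sq, Complex.sq_norm, Complex.sq_norm, Complex.normSq_apply, Complex.normSq_apply] at hsq
    simp only [Complex.sub_re, Complex.ofReal_re, Complex.sub_im, Complex.ofReal_im,
      sub_zero] at hsq
    nlinarith
  calc w = w.re := Complex.eq_re_of_ofReal_le (r := 0) (by simpa using Complex.re_eq_norm.1 hre)
    _ = ‖w‖ := by rw [hre]

lemma abs_norm_sub_le_norm_sub_ofReal (w : ℂ) (r : ℝ) (hr : 0 ≤ r) : |‖w‖ - r| ≤ ‖w - r‖ := by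
  simpa [abs_of_nonneg hr] using abs_norm_sub_norm_le w r

section RootLocation

variable {k : ℕ} {γ δ : ℝ} {z : ℂ}

lemma one_lt_norm_of_mul_eq (hγ : 1 ≤ γ) (hδ : 1 ≤ δ) (hγδ : 1 < (γ - 1) * (δ - 1))
    (hz : (z ^ k - γ) * (z ^ k - δ) = z) : 1 < ‖z‖ := by
  by_contra! h
  have hzk : ‖z ^ k‖ ≤ 1 := by rw [norm_pow]; exact pow_le_one₀ (norm_nonneg _) h
  have h1 := (neg_le_abs _).trans (abs_norm_sub_le_norm_sub_ofReal (z ^ k) γ (by linarith))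
  have h2 := (neg_le_abs _).trans (abs_norm_sub_le_norm_sub_ofReal (z ^ k) δ (by linarith))
  have : (γ - 1) * (δ - 1) ≤ ‖z‖ := by
    rw [← hz, norm_mul]
    exact mul_le_mul (by linarith) (by linarith) (by linarith) (norm_nonneg _)
  linarith

lemma mul_sub_pow_norm_le_norm (hδ : 0 ≤ δ) (hδγ : δ ≤ γ) (hγz : γ ≤ ‖z‖ ^ k)
    (hz : (z ^ k - γ) * (z ^ k - δ) = z) : (‖z‖ ^ k - γ) * (‖z‖ ^ k - δ) ≤ ‖z‖ := by
  rw [← norm_pow] at hγz ⊢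
  conv_rhs => rw [← hz, norm_mul]
  exact mul_le_mul ((le_abs_self _).trans (abs_norm_sub_le_norm_sub_ofReal _ γ (hδ.trans hδγ)))
    ((le_abs_self _).trans (abs_norm_sub_le_norm_sub_ofReal _ δ hδ)) (by linarith) (norm_nonneg _)

lemma eq_of_mul_eq_of_norm_eq {β : ℝ} (hδ : 0 < δ) (hδγ : δ ≤ γ) (hγβ : γ < β ^ k)
    (hβ : (β ^ k - γ) * (β ^ k - δ) = β) (hz : (z ^ k - γ) * (z ^ k - δ) = z) (hzβ : ‖z‖ = β) :
    z = β := by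
  have hzk : ‖z ^ k‖ = β ^ k := by rw [norm_pow, hzβ]
  have h1 := hzk ▸ (le_abs_self _).trans
    (abs_norm_sub_le_norm_sub_ofReal (z ^ k) γ (hδ.le.trans hδγ))
  have h2 := hzk ▸ (le_abs_self _).trans (abs_norm_sub_le_norm_sub_ofReal (z ^ k) δ hδ.le)
  have hprod : ‖z ^ k - γ‖ * ‖z ^ k - δ‖ = (β ^ k - γ) * (β ^ k - δ) := by
    rw [← norm_mul, hz, hzβ, hβ]
  -- both factors dominate their positive lower bounds and the products agree
  have heq : ‖z ^ k - γ‖ = β ^ k - γ := by nlinarith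
  have hzk' : z ^ k = (β ^ k : ℝ) := by
    rw [Complex.eq_norm_of_norm_sub_ofReal (w := z ^ k) (hδ.trans_le hδγ) (by rw [heq, hzk]), hzk]
  rw [← hz, hzk']
  exact_mod_cast hβ

lemma eq_or_norm_lt_of_mul_eq {β : ℝ} (hδ : 0 < δ) (hδγ : δ ≤ γ) (hγβ : γ < β ^ k)
    (hβ : (β ^ k - γ) * (β ^ k - δ) = β) (hmax : ∀ t > β, t < (t ^ k - γ) * (t ^ k - δ))
    (hz : (z ^ k - γ) * (z ^ k - δ) = z) : z = β ∨ ‖z‖ < β := by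
  have hβ0 : 0 ≤ β := hβ ▸ mul_nonneg (by linarith) (by linarith)
  rcases lt_trichotomy ‖z‖ β with h | h | h
  · exact Or.inr h
  · exact Or.inl (eq_of_mul_eq_of_norm_eq hδ hδγ hγβ hβ hz h)
  · have hγz : γ ≤ ‖z‖ ^ k := hγβ.le.trans (pow_le_pow_left₀ hβ0 h.le k)
    exact absurd (mul_sub_pow_norm_le_norm hδ.le hδγ hγz hz) (hmax _ h).not_ge

end RootLocation

lemma exists_greatest_zero {f : ℝ → ℝ} (hf : Continuous f) {a b : ℝ} (ha : f a < 0)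
    (hb : ∀ t ≥ b, 0 < f t) : ∃ c ∈ Ioo a b, f c = 0 ∧ ∀ t > c, 0 < f t := by
  have hab : a < b := lt_of_not_ge fun h => (hb a h).not_gt ha
  obtain ⟨c, ⟨⟨hac, hcb⟩, hc⟩, hmax⟩ : ∃ c, IsGreatest (Icc a b ∩ f ⁻¹' {0}) c := by
    refine (isCompact_Icc.inter_right (isClosed_singleton.preimage hf)).exists_isGreatest ?_
    obtain ⟨c, hc, hfc⟩ := intermediate_value_Icc hab.le hf.continuousOn ⟨ha.le, (hb b le_rfl).le⟩
    exact ⟨c, hc, hfc⟩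
  refine ⟨c, ⟨hac.lt_of_ne ?_, hcb.lt_of_ne ?_⟩, hc, fun t ht => ?_⟩
  · rintro rfl
    exact ha.ne hc
  · rintro rfl
    exact (hb c le_rfl).ne' hc
  by_contra! hft
  have htb : t < b := lt_of_not_ge fun h => (hb t h).not_ge hft
  obtain ⟨r, hr, hfr⟩ := intermediate_value_Icc htb.le hf.continuousOn ⟨hft, (hb b le_rfl).le⟩
  linarith [hmax ⟨⟨by linarith [hr.1], hr.2⟩, hfr⟩, hr.1]

lemma exists_prime_four_mul_lt_sq (N : ℕ) (hN : 4 ≤ N) :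
    ∃ p q : ℕ, q.Prime ∧ 4 * q < p ^ 2 ∧ p < q ∧ 2 * N < p ∧ p ≤ 3 * N + 1 := by
  obtain ⟨q, hq, hNq, hqN⟩ := Nat.exists_prime_lt_and_le_two_mul (N ^ 2) (by positivity)
  have hlo := Nat.lt_succ_sqrt' (4 * q)
  have hhi := Nat.sqrt_le' (4 * q)
  have hs : Nat.sqrt (4 * q) < 3 * N := by nlinarith
  refine ⟨Nat.sqrt (4 * q) + 1, q, hq, hlo, by nlinarith, by nlinarith, by omega⟩

lemma exists_add_eq_mul_eq {p q : ℝ} (h : 4 * q ≤ p ^ 2) :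
    ∃ γ δ : ℝ, γ + δ = p ∧ γ * δ = q ∧ δ ≤ γ := by
  have hs := Real.sq_sqrt (sub_nonneg.2 h)
  refine ⟨(p + √(p ^ 2 - 4 * q)) / 2, (p - √(p ^ 2 - 4 * q)) / 2, by ring, ?_, ?_⟩
  · linear_combination (-1 / 4 : ℝ) * hs
  · linarith [Real.sqrt_nonneg (p ^ 2 - 4 * q)]

lemma exists_quadPowPoly_params {u v : ℝ} (hu : 1 < u) (huv : u < v) :
    ∃ (k p q : ℕ) (γ δ : ℝ), k ≠ 0 ∧ q.Prime ∧ γ + δ = p ∧ γ * δ = q ∧ u ^ k < γ ∧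
      δ ≤ γ ∧ 1 < (γ - 1) * (δ - 1) ∧ γ + δ + 1 ≤ v ^ k := by
  have hvu : 1 < v / u := (one_lt_div (by linarith)).2 huv
  obtain ⟨k, ⟨hu5, hvu4⟩, hk⟩ := (((tendsto_pow_atTop_atTop_of_one_lt hu).eventually_ge_atTop 5).and
    ((tendsto_pow_atTop_atTop_of_one_lt hvu).eventually_ge_atTop 4) |>.and
    (eventually_ne_atTop 0)).exists
  have hv : 4 * u ^ k ≤ v ^ k := by
    rw [div_pow, le_div_iff₀ (by positivity)] at hvu4
    linarith
  have hN := Nat.le_ceil (u ^ k)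
  have hN' := Nat.ceil_lt_add_one (pow_pos (by linarith : (0 : ℝ) < u) k).le
  obtain ⟨p, q, hq, hpq, hpq', hNp, hpN⟩ := exists_prime_four_mul_lt_sq ⌈u ^ k⌉₊
    (by exact_mod_cast (by linarith : (4 : ℝ) ≤ ⌈u ^ k⌉₊))
  obtain ⟨γ, δ, hsum, hprod, hδγ⟩ :=
    exists_add_eq_mul_eq (p := p) (q := q) (by exact_mod_cast hpq.le)
  have hNpR : 2 * (⌈u ^ k⌉₊ : ℝ) < p := by exact_mod_cast hNp
  have hpNR : (p : ℝ) ≤ 3 * ⌈u ^ k⌉₊ + 1 := by exact_mod_cast hpN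
  have hpqR : (p : ℝ) + 1 ≤ q := by exact_mod_cast hpq'
  refine ⟨k, p, q, γ, δ, hk, hq, hsum, hprod, by linarith, hδγ, ?_, by linarith⟩
  have : (γ - 1) * (δ - 1) = q - p + 1 := by linear_combination hprod - hsum
  linarith

lemma exists_roots_mul_pow_sub_eq {k : ℕ} (hk : k ≠ 0) {γ δ u v : ℝ} (hu : 1 < u) (huv : u < v)
    (huγ : u ^ k < γ) (hγδ : 1 < (γ - 1) * (δ - 1)) (hv : γ + δ + 1 ≤ v ^ k) :
    ∃ α β : ℝ, 1 < α ∧ α < β ∧ u < β ∧ β < v ∧ γ < β ^ k ∧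
      (α ^ k - γ) * (α ^ k - δ) = α ∧ (β ^ k - γ) * (β ^ k - δ) = β ∧
      ∀ t > β, t < (t ^ k - γ) * (t ^ k - δ) := by
  set φ : ℝ → ℝ := fun t => (t ^ k - γ) * (t ^ k - δ) - t
  have hφ : Continuous φ := by fun_prop
  have hγ : 1 < γ := (one_lt_pow₀ hu hk).trans huγ
  have hδ : 1 < δ := by nlinarith
  set c := γ ^ (k : ℝ)⁻¹
  have hc0 : 0 ≤ c := Real.rpow_nonneg (by linarith) _
  have hc : c ^ k = γ := Real.rpow_inv_natCast_pow (by linarith) hk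
  have huc : u < c := lt_of_pow_lt_pow_left₀ k hc0 (hc ▸ huγ)
  have hφc : φ c < 0 := by simp only [φ, hc]; linarith
  have hφ1 : 0 < φ 1 := by simp only [φ, one_pow]; nlinarith
  have htail : ∀ t ≥ v, 0 < φ t := by
    intro t ht
    have hvt : v ^ k ≤ t ^ k := pow_le_pow_left₀ (by linarith) ht k
    have htt : t ≤ t ^ k := le_self_pow₀ (by linarith) hk
    simp only [φ]
    nlinarith [mul_nonneg (by linarith : (0 : ℝ) ≤ t ^ k) (by linarith : 0 ≤ t ^ k - γ - δ - 1)]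
  obtain ⟨β, ⟨hcβ, hβv⟩, hβ, hmax⟩ := exists_greatest_zero hφ hφc htail
  obtain ⟨α, ⟨h1α, hαc⟩, hα⟩ := intermediate_value_Ioo' (hu.trans huc).le hφ.continuousOn ⟨hφc, hφ1⟩
  exact ⟨α, β, h1α, hαc.trans hcβ, huc.trans hcβ, hβv, hc ▸ pow_lt_pow_left₀ hcβ hc0 hk,
    sub_eq_zero.1 hα, sub_eq_zero.1 hβ, fun t ht => sub_pos.1 (hmax t ht)⟩

lemma isPerron_of_minpoly_int {β : ℝ} (hβ : 1 < β) (hint : IsIntegral ℤ β)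
    (h : ∀ z : ℂ, aeval z (minpoly ℤ β) = 0 → z ≠ β → ‖z‖ < β) : IsPerron β := by
  refine ⟨hβ, hint, fun z hz => h z ?_⟩
  rwa [minpoly.isIntegrallyClosed_eq_field_fractions' ℚ hint, aeval_map_algebraMap] at hz

lemma aeval_pow_eq_zero_of_conj {R S : Type*} [CommSemiring R] [CommSemiring S] [Algebra R S]
    {a b : S} (h : ∀ F : R[X], aeval b F = 0 → aeval a F = 0) (n : ℕ) (F : R[X])
    (hF : aeval (b ^ n) F = 0) : aeval (a ^ n) F = 0 := by
  simpa [aeval_comp] using h (F.comp (X ^ n)) (by simpa [aeval_comp] using hF)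

theorem exists_isPerron_with_conj {u v : ℝ} (hu : 1 < u) (huv : u < v) :
    ∃ α β : ℝ, 1 < α ∧ α < β ∧ u < β ∧ β < v ∧ IsPerron β ∧
      ∀ F : ℤ[X], aeval β F = 0 → aeval α F = 0 := by
  obtain ⟨k, p, q, γ, δ, hk, hq, hsum, hprod, huγ, hδγ, hγδ, hv⟩ := exists_quadPowPoly_params hu huv
  obtain ⟨α, β, hα1, hαβ, huβ, hβv, hγβ, hα, hβ, hmax⟩ :=
    exists_roots_mul_pow_sub_eq hk hu huv huγ hγδ hv
  have hγ : 1 < γ := (one_lt_pow₀ hu hk).trans huγ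
  have hδ : 1 < δ := by nlinarith
  set g := quadPowPoly k p q
  have hgR (t : ℝ) : aeval t g = (t ^ k - γ) * (t ^ k - δ) - t := aeval_quadPowPoly hsum hprod t
  have hgC (z : ℂ) : aeval z g = 0 ↔ (z ^ k - γ) * (z ^ k - δ) = z := by
    rw [aeval_quadPowPoly (γ := (γ : ℂ)) (δ := δ) (by exact_mod_cast hsum)
      (by exact_mod_cast hprod), sub_eq_zero]
  have hirr : Irreducible g := irreducible_of_prime_coeff_zero (quadPowPoly_monic hk)
    (by rw [coeff_zero_quadPowPoly hk]; exact Nat.prime_iff_prime_int.1 hq)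
    fun z hz => one_lt_norm_of_mul_eq hγ.le hδ.le hγδ ((hgC z).1 hz)
  have hβg : aeval β g = 0 := by rw [hgR, hβ, sub_self]
  have hint : IsIntegral ℤ β := ⟨g, quadPowPoly_monic hk, hβg⟩
  have hmin : minpoly ℤ β = g := minpoly_eq_of_irreducible (quadPowPoly_monic hk) hirr hβg
  refine ⟨α, β, hα1, hαβ, huβ, hβv, isPerron_of_minpoly_int (hα1.trans hαβ) hint ?_, ?_⟩
  · intro z hz hzβ
    rw [hmin] at hz
    exact (eq_or_norm_lt_of_mul_eq (by linarith) hδγ hγβ hβ hmax ((hgC z).1 hz)).resolve_left hzβ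
  · intro F hF
    obtain ⟨e, rfl⟩ := hmin ▸ minpoly.isIntegrallyClosed_dvd hint hF
    rw [map_mul, hgR, hα, sub_self, zero_mul]

/-- The set `H₀` of Perron numbers none of whose positive powers is Parry is dense
in `(1, ∞)`. -/
theorem H_zero_dense :
    ∀ u v : ℝ, 1 < u → u < v →
      ∃ β : ℝ, u < β ∧ β < v ∧ IsPerron β ∧ ∀ n : ℕ, 1 ≤ n → ¬ IsParry (β ^ n) := by
  intro u v hu huv
  obtain ⟨α, β, hα1, hαβ, huβ, hβv, hβ, hconj⟩ := exists_isPerron_with_conj hu huv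
  refine ⟨β, huβ, hβv, hβ, fun n hn => ?_⟩
  exact not_isParry_of_conj (one_lt_pow₀ hα1 (by omega))
    (pow_lt_pow_left₀ hαβ (by linarith) (by omega)) (aeval_pow_eq_zero_of_conj hconj n)
end
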